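/- Let f be convex with L_f-Lipschitz gradient, g proper lsc convex, and 0 < γ < 1/L_f. If φ = f + g satisfies the quadratic growth condition with constants (μ, ν), then the forward-backward envelope φ_γ satisfies the quadratic growth condition with constants (μ', ν), where μ' = ((1 − γL_f)/(1 + γL_f)²) · (μγ/(2 + γμ)²) · μ. Conversely, if φ_γ satisfies quadratic growth with constants (μ, ν), then so does φ with the same constants. -/

import Mathlib

set_option linter.unusedVariables false
noncomputable section

variable {E : Type*} [NormedAddCommGroup E] [InnerProductSpace ℝ E] [CompleteSpace E]

lemma line_hasDerivAt {f : E → ℝ} {f' : E → E} (hgrad : ∀ x, HasGradientAt f (f' x) x)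
    (x d : E) (t : ℝ) :
    HasDerivAt (fun t : ℝ => f (x + t • d)) (inner ℝ (f' (x + t • d)) d : ℝ) t := by
  have h1 : HasDerivAt (fun t : ℝ => x + t • d) d t := by
    simpa using ((hasDerivAt_id t).smul_const d).const_add x
  have h2 := (hgrad (x + t • d)).hasFDerivAt.comp_hasDerivAt t h1
  simp only [InnerProductSpace.toDual_apply_apply] at h2
  exact h2

/-- convex differentiable: tangent line below. -/
lemma grad_convex_ineq {f : E → ℝ} {f' : E → E} (hconv : ConvexOn ℝ Set.univ f)
    (hgrad : ∀ x, HasGradientAt f (f' x) x) (x z : E) :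
    f x + (inner ℝ (f' x) (z - x) : ℝ) ≤ f z := by
  set d := z - x with hd
  have hk : ConvexOn ℝ Set.univ (fun t : ℝ => f (x + t • d)) := by
    have := hconv.comp_affineMap (AffineMap.lineMap x z : ℝ →ᵃ[ℝ] E)
    refine (this.subset (by simp) convex_univ).congr ?_
    intro t _
    simp only [Function.comp, AffineMap.lineMap_apply_module', hd]
    rw [add_comm]
  have hder := line_hasDerivAt hgrad x d 0
  have := hk.le_slope_of_hasDerivAt (Set.mem_univ (0:ℝ)) (Set.mem_univ (1:ℝ)) one_pos hder
  rw [slope_def_field] at this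
  simp only [zero_smul, add_zero, one_smul] at this hder ⊢
  have hz : x + d = z := by rw [hd]; abel
  rw [hz] at this
  simp only [div_one, sub_zero] at this
  linarith [this]

/-- Descent lemma: quadratic upper bound from Lipschitz gradient. -/
lemma descent_lemma {f : E → ℝ} {f' : E → E} (hgrad : ∀ x, HasGradientAt f (f' x) x)
    {L : ℝ} (hL : 0 ≤ L) (hlip : LipschitzWith (Real.toNNReal L) f') (x z : E) :
    f z ≤ f x + (inner ℝ (f' x) (z - x) : ℝ) + L/2 * ‖z - x‖^2 := by
  set d := z - x with hd
  set k' : ℝ → ℝ := fun t => (inner ℝ (f' (x + t • d)) d : ℝ) with hk'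
  have hder : ∀ t : ℝ, HasDerivAt (fun t : ℝ => f (x + t • d)) (k' t) t :=
    fun t => line_hasDerivAt hgrad x d t
  set m : ℝ → ℝ := fun t => f (x + t • d) - t * k' 0 - L/2 * t^2 * ‖d‖^2 with hm
  have hmder : ∀ t : ℝ, HasDerivAt m (k' t - k' 0 - L * t * ‖d‖^2) t := by
    intro t
    have h1 : HasDerivAt (fun t : ℝ => t * k' 0) (k' 0) t := by
      simpa using (hasDerivAt_id t).mul_const (k' 0)
    have h2 : HasDerivAt (fun t : ℝ => L/2 * t^2 * ‖d‖^2) (L * t * ‖d‖^2) t := by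
      have := ((hasDerivAt_pow 2 t).const_mul (L/2)).mul_const (‖d‖^2)
      exact this.congr_deriv (by ring)
    exact ((hder t).sub h1).sub h2
  obtain ⟨c, hc, hceq⟩ := exists_hasDerivAt_eq_slope m _ one_pos
    (fun t _ => (hmder t).continuousAt.continuousWithinAt)
    (fun t _ => hmder t)
  have hcpos : 0 < c := hc.1
  have hklip : k' c - k' 0 ≤ L * c * ‖d‖^2 := by
    have h1 : k' c - k' 0 = (inner ℝ (f' (x + c • d) - f' (x + (0:ℝ) • d)) d : ℝ) := by
      simp [hk', inner_sub_left]
    have h2 : (inner ℝ (f' (x + c • d) - f' (x + (0:ℝ) • d)) d : ℝ)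
        ≤ ‖f' (x + c • d) - f' (x + (0:ℝ) • d)‖ * ‖d‖ := real_inner_le_norm _ _
    have h3 : ‖f' (x + c • d) - f' (x + (0:ℝ) • d)‖ ≤ L * (c * ‖d‖) := by
      have he : (x + c • d) - (x + (0:ℝ) • d) = c • d := by
        simp
      calc ‖f' (x + c • d) - f' (x + (0:ℝ) • d)‖
          = dist (f' (x + c • d)) (f' (x + (0:ℝ) • d)) := (dist_eq_norm _ _).symm
        _ ≤ (Real.toNNReal L : ℝ) * dist (x + c • d) (x + (0:ℝ) • d) := hlip.dist_le_mul _ _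
        _ = L * (c * ‖d‖) := by
            rw [Real.coe_toNNReal L hL, dist_eq_norm, he, norm_smul]
            simp [abs_of_pos hcpos]
    calc k' c - k' 0 ≤ ‖f' (x + c • d) - f' (x + (0:ℝ) • d)‖ * ‖d‖ := h1 ▸ h2
      _ ≤ L * (c * ‖d‖) * ‖d‖ := by
          apply mul_le_mul_of_nonneg_right h3 (norm_nonneg d)
      _ = L * c * ‖d‖^2 := by ring
  have hm10 : m 1 ≤ m 0 := by
    rw [show ((1:ℝ) - 0) = 1 by norm_num, div_one] at hceq
    linarith
  have he0 : x + (0:ℝ) • d = x := by simp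
  have he1 : x + (1:ℝ) • d = z := by simp [hd]
  simp only [hm, he0, he1, one_pow, mul_one, one_mul, zero_mul, sub_zero, mul_zero,
    zero_pow] at hm10
  have hk0 : k' 0 = (inner ℝ (f' x) (z - x) : ℝ) := by simp [hk', he0, hd]
  rw [hk0] at hm10
  linarith

/-- A lower semicontinuous `EReal`-valued function attains its minimum on a nonempty compact. -/
lemma lsc_min_on_compact {X : Type*} [MetricSpace X] {K : Set X} (hK : IsCompact K)
    (hne : K.Nonempty) {h : X → EReal} (hh : LowerSemicontinuous h) :
    ∃ p ∈ K, ∀ w ∈ K, h p ≤ h w := by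
  set m : EReal := sInf (h '' K) with hm
  by_cases htop : m = ⊤
  · obtain ⟨p, hp⟩ := hne
    exact ⟨p, hp, fun w hw => by
      have : h p ≤ ⊤ := le_top
      have hmle : m ≤ h w := sInf_le ⟨w, hw, rfl⟩
      rw [htop] at hmle
      exact le_trans (le_trans this hmle) le_rfl⟩
  · have hmlt : m < ⊤ := lt_top_iff_ne_top.2 htop
    set ι := {a : EReal // m < a} with hι
    have hιne : Nonempty ι := ⟨⟨⊤, hmlt⟩⟩
    set Ka : ι → Set X := fun a => K ∩ h ⁻¹' Set.Iic a.1 with hKa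
    have hKane : ∀ a : ι, (Ka a).Nonempty := by
      intro a
      obtain ⟨v, hv, hva⟩ := sInf_lt_iff.1 (a.2)
      obtain ⟨w, hw, rfl⟩ := hv
      exact ⟨w, hw, le_of_lt hva⟩
    have hKacl : ∀ a : ι, IsClosed (Ka a) :=
      fun a => hK.isClosed.inter (hh.isClosed_preimage a.1)
    have hKacp : ∀ a : ι, IsCompact (Ka a) :=
      fun a => hK.inter_right (hh.isClosed_preimage a.1)
    have hdir : Directed (· ⊇ ·) Ka := by
      intro a b
      refine ⟨⟨min a.1 b.1, lt_min a.2 b.2⟩, ?_, ?_⟩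
      · intro w hw
        simp only [hKa, Set.mem_inter_iff, Set.mem_preimage, Set.mem_Iic] at hw ⊢
        exact ⟨hw.1, le_trans hw.2 (min_le_left _ _)⟩
      · intro w hw
        simp only [hKa, Set.mem_inter_iff, Set.mem_preimage, Set.mem_Iic] at hw ⊢
        exact ⟨hw.1, le_trans hw.2 (min_le_right _ _)⟩
    obtain ⟨p, hp⟩ := IsCompact.nonempty_iInter_of_directed_nonempty_isCompact_isClosed
      Ka hdir hKane hKacp hKacl
    have hpK : p ∈ K := (Set.mem_iInter.1 hp ⟨⊤, hmlt⟩).1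
    refine ⟨p, hpK, fun w hw => ?_⟩
    have hpm : h p ≤ m := by
      apply le_of_forall_gt_imp_ge_of_dense
      intro a ha
      exact Set.mem_Iic.1 (Set.mem_iInter.1 hp ⟨a, ha⟩).2
    exact le_trans hpm (sInf_le ⟨w, hw, rfl⟩)


/-- Euclidean space ℝⁿ. -/
abbrev Eucl (n : ℕ) := EuclideanSpace ℝ (Fin n)

/-- A proper extended-real-valued function: not identically +∞ and nowhere -∞. -/
def ProperFun {n : ℕ} (g : Eucl n → EReal) : Prop := (∃ x, g x ≠ ⊤) ∧ ∀ x, g x ≠ ⊥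

/-- Convexity for extended-real-valued functions. -/
def ConvexFun {n : ℕ} (g : Eucl n → EReal) : Prop :=
  ∀ x y : Eucl n, ∀ a b : ℝ, 0 ≤ a → 0 ≤ b → a + b = 1 →
    g (a • x + b • y) ≤ (a : EReal) * g x + (b : EReal) * g y

/-- `p` is the proximal point `prox_{γ g}(y)`, i.e. it minimizes
`w ↦ g w + (1/(2γ))‖w - y‖²`. -/
def IsProx {n : ℕ} (g : Eucl n → EReal) (γ : ℝ) (y p : Eucl n) : Prop :=
  ∀ w, g p + ((1/(2*γ) * ‖p - y‖^2 : ℝ) : EReal) ≤ g w + ((1/(2*γ) * ‖w - y‖^2 : ℝ) : EReal)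

/-- The Moreau envelope `g^γ(x) = inf_w { g w + (1/(2γ))‖w - x‖² }`. -/
def moreauEnv {n : ℕ} (g : Eucl n → EReal) (γ : ℝ) (x : Eucl n) : EReal :=
  ⨅ w, g w + ((1/(2*γ) * ‖w - x‖^2 : ℝ) : EReal)

/-- The convex subdifferential of an extended-real-valued function. -/
def subdiff {n : ℕ} (φ : Eucl n → EReal) (x : Eucl n) : Set (Eucl n) :=
  {v | ∀ z, φ x + ((inner ℝ v (z - x) : ℝ) : EReal) ≤ φ z}

/-- The forward-backward envelope
`φ_γ(x) = inf_w { f x + ⟨∇f x, w - x⟩ + (1/(2γ))‖w - x‖² + g w }`. -/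
def fbe {n : ℕ} (f : Eucl n → ℝ) (f' : Eucl n → Eucl n) (g : Eucl n → EReal) (γ : ℝ)
    (x : Eucl n) : EReal :=
  ⨅ w, ((f x + (inner ℝ (f' x) (w - x) : ℝ) + 1/(2*γ) * ‖w - x‖^2 : ℝ) : EReal) + g w

/-- The distance (in `EReal`, so `⊤` if the set is empty) from `0` to a set of vectors. -/
def distZero {n : ℕ} (S : Set (Eucl n)) : EReal := ⨅ v ∈ S, ((‖v‖ : ℝ) : EReal)

lemma prox_subgrad {n : ℕ} {g : Eucl n → EReal} (hgconv : ConvexFun g) {γ : ℝ} (hγ : 0 < γ)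
    {y p : Eucl n} (hprox : IsProx g γ y p) {gp : ℝ} (hgp : g p = (gp : EReal))
    (z : Eucl n) (gz : ℝ) (hgz : g z = (gz : EReal)) :
    gp + (inner ℝ ((1/γ) • (y - p)) (z - p) : ℝ) ≤ gz := by
  set C : ℝ := 1/(2*γ) * ‖z - p‖^2 with hC
  have hCnn : 0 ≤ C := by positivity
  have key : ∀ t : ℝ, 0 < t → t ≤ 1 →
      gp + (inner ℝ ((1/γ) • (y - p)) (z - p) : ℝ) ≤ gz + t * C := by
    intro t ht0 ht1
    have hw : p + t • (z - p) = (1 - t) • p + t • z := by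
      module
    have hcv := hgconv p z (1 - t) t (by linarith) (le_of_lt ht0) (by ring)
    rw [hgp, hgz, ← EReal.coe_mul, ← EReal.coe_mul, ← EReal.coe_add] at hcv
    have hpx := hprox ((1 - t) • p + t • z)
    rw [hgp] at hpx
    have hchain : ((gp + 1/(2*γ) * ‖p - y‖^2 : ℝ) : EReal)
        ≤ (((1 - t) * gp + t * gz + 1/(2*γ) * ‖(1 - t) • p + t • z - y‖^2 : ℝ) : EReal) := by
      rw [EReal.coe_add, EReal.coe_add]
      refine le_trans hpx ?_
      exact add_le_add hcv le_rfl
    rw [EReal.coe_le_coe_iff] at hchain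
    have hnorm : ‖(1 - t) • p + t • z - y‖^2
        = ‖p - y‖^2 + 2 * t * (inner ℝ (p - y) (z - p) : ℝ) + t^2 * ‖z - p‖^2 := by
      have he : (1 - t) • p + t • z - y = (p - y) + t • (z - p) := by module
      rw [he, norm_add_sq_real, real_inner_smul_right, norm_smul]
      simp [mul_pow]
      ring
    rw [hnorm] at hchain
    have hip : (inner ℝ ((1/γ) • (y - p)) (z - p) : ℝ) = -(1/γ) * (inner ℝ (p - y) (z - p) : ℝ) := by
      rw [real_inner_smul_left]
      have : y - p = -(p - y) := by abel
      rw [this, inner_neg_left]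
      ring
    rw [hip]
    have hb : 1/(2*γ) = (1/γ)/2 := by
      rw [div_div]; ring_nf
    rw [hb] at hchain
    have h3 : gp ≤ gz + (1/γ) * (inner ℝ (p - y) (z - p) : ℝ) + t * C := by
      have hmul : t * gp ≤ t * (gz + (1/γ) * (inner ℝ (p - y) (z - p) : ℝ) + t * C) := by
        rw [hC, hb]; nlinarith [hchain]
      exact le_of_mul_le_mul_left hmul ht0
    linarith
  apply le_of_forall_pos_le_add
  intro ε hε
  have htpos : 0 < min 1 (ε / (C + 1)) := lt_min one_pos (by positivity)
  have := key (min 1 (ε / (C + 1))) htpos (min_le_left _ _)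
  have htC : min 1 (ε / (C + 1)) * C ≤ ε := by
    have h1 : min 1 (ε / (C + 1)) ≤ ε / (C + 1) := min_le_right _ _
    have h2 : min 1 (ε / (C + 1)) * C ≤ (ε / (C + 1)) * C :=
      mul_le_mul_of_nonneg_right h1 hCnn
    have h3 : (ε / (C + 1)) * C ≤ ε := by
      rw [div_mul_eq_mul_div, div_le_iff₀ (by linarith)]
      nlinarith
    linarith
  linarith


lemma exists_min_q {n : ℕ} (g : Eucl n → EReal) (hglsc : LowerSemicontinuous g)
    (hgp : ProperFun g) (r : Eucl n → ℝ) (hr : Continuous r) (c δ : ℝ) (hδ : 0 < δ)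
    (x : Eucl n)
    (hlb : ∀ w, (c : EReal) + ((δ * ‖w - x‖^2 : ℝ) : EReal) ≤ (r w : EReal) + g w) :
    ∃ p, ∀ w, (r p : EReal) + g p ≤ (r w : EReal) + g w := by
  set q : Eucl n → EReal := fun w => (r w : EReal) + g w with hq
  obtain ⟨w₀, hw₀⟩ := hgp.1
  have hw₀b : g w₀ ≠ ⊥ := hgp.2 w₀
  set M : ℝ := r w₀ + (g w₀).toReal with hM
  have hqw₀ : q w₀ = (M : EReal) := by
    rw [hq, hM, EReal.coe_add, EReal.coe_toReal hw₀ hw₀b]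
  have hlsc : LowerSemicontinuous q := by
    apply LowerSemicontinuous.add'
    · exact (continuous_coe_real_ereal.comp hr).lowerSemicontinuous
    · exact hglsc
    · intro w
      exact EReal.continuousAt_add (Or.inl (EReal.coe_ne_top _)) (Or.inl (EReal.coe_ne_bot _))
  have hlbw₀ : c + δ * ‖w₀ - x‖^2 ≤ M := by
    have h2 : ((c + δ * ‖w₀ - x‖^2 : ℝ) : EReal) ≤ (M : EReal) := by
      rw [EReal.coe_add]; exact le_trans (hlb w₀) (le_of_eq hqw₀)
    exact EReal.coe_le_coe_iff.1 h2
  have hMc : c ≤ M := by nlinarith [norm_nonneg (w₀ - x), sq_nonneg ‖w₀ - x‖]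
  set R : ℝ := Real.sqrt ((M - c + 1)/δ) with hR
  have hRsq : R^2 = (M - c + 1)/δ := Real.sq_sqrt (div_nonneg (by linarith) hδ.le)
  have hRnn : 0 ≤ R := Real.sqrt_nonneg _
  have hw₀K : w₀ ∈ Metric.closedBall x R := by
    rw [Metric.mem_closedBall, dist_eq_norm]
    have h1 : ‖w₀ - x‖^2 ≤ (M - c + 1)/δ := by
      rw [le_div_iff₀ hδ]; nlinarith
    calc ‖w₀ - x‖ = Real.sqrt (‖w₀ - x‖^2) := (Real.sqrt_sq (norm_nonneg _)).symm
      _ ≤ R := Real.sqrt_le_sqrt h1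
  obtain ⟨p, hpK, hpmin⟩ := lsc_min_on_compact (isCompact_closedBall x R)
    ⟨w₀, hw₀K⟩ hlsc
  refine ⟨p, fun w => ?_⟩
  by_cases hwK : w ∈ Metric.closedBall x R
  · exact hpmin w hwK
  · have hwR : R < ‖w - x‖ := by
      rw [Metric.mem_closedBall, dist_eq_norm, not_le] at hwK
      exact hwK
    have hsq : (M - c + 1)/δ < ‖w - x‖^2 := by
      rw [← hRsq]
      exact pow_lt_pow_left₀ hwR hRnn (by norm_num)
    have hMlt : M ≤ c + δ * ‖w - x‖^2 := by
      rw [div_lt_iff₀ hδ] at hsq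
      nlinarith
    calc q p ≤ q w₀ := hpmin w₀ hw₀K
      _ = (M : EReal) := hqw₀
      _ ≤ ((c + δ * ‖w - x‖^2 : ℝ) : EReal) := EReal.coe_le_coe_iff.2 hMlt
      _ ≤ q w := by rw [EReal.coe_add]; exact hlb w


set_option maxHeartbeats 1600000

/-- equivalence of quadratic growth for `φ` and for the FBE `φ_γ`
(they share infimum and minimizers `X⋆`): if `φ` has quadratic growth with constants
(μ, ν) then `φ_γ` has it with constants (μ', ν) where
`μ' = ((1−γL_f)/(1+γL_f)²)·(μγ/(2+γμ)²)·μ`; conversely quadratic growth of `φ_γ`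
transfers to `φ` with the same constants. -/
theorem quadratic_growth_equiv_fbe {n : ℕ} (f : Eucl n → ℝ) (f' : Eucl n → Eucl n)
    (hconvf : ConvexOn ℝ Set.univ f) (hgrad : ∀ x, HasGradientAt f (f' x) x)
    (Lf : ℝ) (hLf : 0 < Lf) (hlip : LipschitzWith (Real.toNNReal Lf) f')
    (g : Eucl n → EReal) (hgp : ProperFun g) (hglsc : LowerSemicontinuous g)
    (hgconv : ConvexFun g)
    (γ : ℝ) (hγ : 0 < γ) (hγL : γ < 1/Lf)
    (Xstar : Set (Eucl n))
    (hX : Xstar = {z | ∀ y, (f z : EReal) + g z ≤ (f y : EReal) + g y}) (hne : Xstar.Nonempty)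
    (μ ν : ℝ) (hμ : 0 < μ) (hν : 0 < ν) :
    ((∀ x, (f x : EReal) + g x ≤ (⨅ y, (f y : EReal) + g y) + (ν : EReal) →
        (⨅ y, (f y : EReal) + g y) + ((μ/2 * (Metric.infDist x Xstar)^2 : ℝ) : EReal)
          ≤ (f x : EReal) + g x) →
      (∀ x, fbe f f' g γ x ≤ (⨅ y, (f y : EReal) + g y) + (ν : EReal) →
        (⨅ y, (f y : EReal) + g y)
          + ((((1 - γ*Lf)/(1 + γ*Lf)^2 * (μ*γ/(2 + γ*μ)^2) * μ)/2
              * (Metric.infDist x Xstar)^2 : ℝ) : EReal)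
          ≤ fbe f f' g γ x)) ∧
    ((∀ x, fbe f f' g γ x ≤ (⨅ y, (f y : EReal) + g y) + (ν : EReal) →
        (⨅ y, (f y : EReal) + g y) + ((μ/2 * (Metric.infDist x Xstar)^2 : ℝ) : EReal)
          ≤ fbe f f' g γ x) →
      (∀ x, (f x : EReal) + g x ≤ (⨅ y, (f y : EReal) + g y) + (ν : EReal) →
        (⨅ y, (f y : EReal) + g y) + ((μ/2 * (Metric.infDist x Xstar)^2 : ℝ) : EReal)
          ≤ (f x : EReal) + g x)) := by
  have hLf0 : 0 ≤ Lf := hLf.le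
  have hγL1 : γ * Lf < 1 := (lt_div_iff₀ hLf).1 hγL
  obtain ⟨z₀, hz₀⟩ := hne
  have hz₀min : ∀ y, (f z₀ : EReal) + g z₀ ≤ (f y : EReal) + g y := by
    rw [hX] at hz₀; exact hz₀
  obtain ⟨x₁, hx₁⟩ := hgp.1
  have hφx₁ : (f x₁ : EReal) + g x₁ ≠ ⊤ := by
    rw [← EReal.coe_toReal hx₁ (hgp.2 x₁), ← EReal.coe_add]
    exact EReal.coe_ne_top _
  have hgz₀top : g z₀ ≠ ⊤ := by
    intro h
    rw [h, EReal.coe_add_top] at hz₀min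
    exact hφx₁ (top_le_iff.1 (hz₀min x₁))
  set c : ℝ := f z₀ + (g z₀).toReal with hc
  have hφz₀ : (f z₀ : EReal) + g z₀ = (c : EReal) := by
    rw [hc, EReal.coe_add, EReal.coe_toReal hgz₀top (hgp.2 z₀)]
  have hΦ : (⨅ y, (f y : EReal) + g y) = (c : EReal) :=
    le_antisymm (le_trans (iInf_le _ z₀) (le_of_eq hφz₀))
      (le_iInf fun y => hφz₀ ▸ hz₀min y)
  have hΦle : ∀ w, (c : EReal) ≤ (f w : EReal) + g w := fun w => hφz₀ ▸ hz₀min w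
  -- lower semicontinuity of φ and closedness of Xstar
  have hfc : Continuous f := continuous_iff_continuousAt.2 fun w => (hgrad w).continuousAt
  have hφlsc : LowerSemicontinuous (fun w => (f w : EReal) + g w) := by
    apply LowerSemicontinuous.add'
    · exact (continuous_coe_real_ereal.comp hfc).lowerSemicontinuous
    · exact hglsc
    · intro w
      exact EReal.continuousAt_add (Or.inl (EReal.coe_ne_top _)) (Or.inl (EReal.coe_ne_bot _))
  have hXeq : Xstar = (fun w => (f w : EReal) + g w) ⁻¹' Set.Iic (c : EReal) := by
    rw [hX]
    ext z
    simp only [Set.mem_setOf_eq, Set.mem_preimage, Set.mem_Iic]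
    constructor
    · intro h; exact le_trans (h z₀) (le_of_eq hφz₀)
    · intro h y; exact le_trans h (hΦle y)
  have hXclosed : IsClosed Xstar := hXeq ▸ hφlsc.isClosed_preimage _
  have hXval : ∀ z ∈ Xstar, (f z : EReal) + g z = (c : EReal) := by
    intro z hz
    rw [hXeq] at hz
    exact le_antisymm hz (hΦle z)
  constructor
  · -- forward direction
    intro hqg x hx
    set δ : ℝ := 1/(2*γ) - Lf/2 with hδdef
    have hδ : 0 < δ := by
      rw [hδdef]
      have h1 : Lf/2 < 1/(2*γ) := by
        rw [div_lt_div_iff₀ (by norm_num) (by linarith)]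
        nlinarith
      linarith
    set r : Eucl n → ℝ :=
      fun w => f x + (inner ℝ (f' x) (w - x) : ℝ) + 1/(2*γ) * ‖w - x‖^2 with hrdef
    have hr : Continuous r := by
      apply Continuous.add
      apply Continuous.add continuous_const
      · exact continuous_const.inner (continuous_id.sub continuous_const)
      · exact continuous_const.mul (((continuous_id.sub continuous_const).norm).pow 2)
    have hdesc : ∀ w : Eucl n, f w + δ * ‖w - x‖^2 ≤ r w := by
      intro w
      have := descent_lemma hgrad hLf0 hlip x w
      rw [hrdef]
      simp only
      nlinarith [this]
    have hlb : ∀ w, (c : EReal) + ((δ * ‖w - x‖^2 : ℝ) : EReal) ≤ (r w : EReal) + g w := by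
      intro w
      calc (c : EReal) + ((δ * ‖w - x‖^2 : ℝ) : EReal)
          ≤ ((f w : EReal) + g w) + ((δ * ‖w - x‖^2 : ℝ) : EReal) :=
            add_le_add (hΦle w) le_rfl
        _ = ((f w + δ * ‖w - x‖^2 : ℝ) : EReal) + g w := by
            rw [EReal.coe_add, add_right_comm]
        _ ≤ (r w : EReal) + g w :=
            add_le_add (EReal.coe_le_coe_iff.2 (hdesc w)) le_rfl
    obtain ⟨p, hp⟩ := exists_min_q g hglsc hgp r hr c δ hδ x hlb
    have hfbe : fbe f f' g γ x = (r p : EReal) + g p :=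
      le_antisymm (iInf_le _ p) (le_iInf hp)
    have hgptop : g p ≠ ⊤ := by
      intro h
      have h1 := hp x₁
      rw [h, EReal.coe_add_top, ← EReal.coe_toReal hx₁ (hgp.2 x₁), ← EReal.coe_add,
        top_le_iff] at h1
      exact EReal.coe_ne_top _ h1
    set gp : ℝ := (g p).toReal with hgpdef
    have hgpe : g p = (gp : EReal) := (EReal.coe_toReal hgptop (hgp.2 p)).symm
    set F : ℝ := r p + gp with hFdef
    have hF : fbe f f' g γ x = (F : EReal) := by
      rw [hfbe, hgpe, ← EReal.coe_add]
    have hFcν : F ≤ c + ν := by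
      rw [hF, hΦ, ← EReal.coe_add, EReal.coe_le_coe_iff] at hx
      exact hx
    set N : ℝ := ‖p - x‖ with hNdef
    set φp : ℝ := f p + gp with hφpdef
    have hφpF : φp + δ * N^2 ≤ F := by
      have := hdesc p
      rw [hFdef, hφpdef, hNdef]
      linarith
    have hφpc : c ≤ φp := by
      have := hΦle p
      rw [hgpe, ← EReal.coe_add, EReal.coe_le_coe_iff] at this
      exact this
    have hφpν : φp ≤ c + ν := by nlinarith [sq_nonneg N]
    -- quadratic growth at p
    set Dp : ℝ := Metric.infDist p Xstar with hDp
    have hqgp : c + μ/2 * Dp^2 ≤ φp := by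
      have h1 : (f p : EReal) + g p ≤ (⨅ y, (f y : EReal) + g y) + (ν : EReal) := by
        rw [hΦ, hgpe, ← EReal.coe_add, ← EReal.coe_add, EReal.coe_le_coe_iff]
        exact hφpν
      have h2 := hqg p h1
      rw [hΦ, hgpe, ← EReal.coe_add, ← EReal.coe_add, EReal.coe_le_coe_iff] at h2
      exact h2
    -- projection of p onto Xstar
    obtain ⟨zs, hzsX, hzs⟩ := hXclosed.exists_infDist_eq_dist ⟨z₀, hz₀⟩ p
    have hgzstop : g zs ≠ ⊤ := by
      intro h
      have := hXval zs hzsX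
      rw [h, EReal.coe_add_top] at this
      exact EReal.coe_ne_top c this.symm
    set gzs : ℝ := (g zs).toReal with hgzsdef
    have hgzse : g zs = (gzs : EReal) := (EReal.coe_toReal hgzstop (hgp.2 zs)).symm
    have hzsval : f zs + gzs = c := by
      have := hXval zs hzsX
      rw [hgzse, ← EReal.coe_add] at this
      exact EReal.coe_eq_coe_iff.1 this
    -- prox characterization
    set y : Eucl n := x - γ • f' x with hydef
    set K : ℝ := γ/2 * ‖f' x‖^2 - f x with hK
    have hiden : ∀ w : Eucl n, (1/(2*γ) * ‖w - y‖^2 : ℝ) = r w + K := by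
      intro w
      have he : w - y = (w - x) + γ • f' x := by rw [hydef]; module
      have hn : ‖w - y‖^2
          = ‖w - x‖^2 + 2*γ*(inner ℝ (f' x) (w - x) : ℝ) + γ^2 * ‖f' x‖^2 := by
        rw [he, norm_add_sq_real, real_inner_smul_right, norm_smul,
          Real.norm_eq_abs, abs_of_pos hγ, real_inner_comm, mul_pow]
        ring
      rw [hn, hrdef, hK]
      simp only
      field_simp
      ring
    have hprox : IsProx g γ y p := by
      intro w
      rw [hiden p, hiden w, EReal.coe_add, EReal.coe_add]
      calc g p + ((r p : EReal) + (K : EReal))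
          = ((r p : EReal) + g p) + (K : EReal) := by
            rw [← add_assoc, add_comm (g p)]
        _ ≤ ((r w : EReal) + g w) + (K : EReal) := add_le_add (hp w) le_rfl
        _ = g w + ((r w : EReal) + (K : EReal)) := by
            rw [← add_assoc, add_comm (g w)]
    have hsub := prox_subgrad hgconv hγ hprox hgpe zs gzs hgzse
    have hgrd := grad_convex_ineq hconvf hgrad p zs
    set v : Eucl n := (1/γ) • (y - p) + f' p with hvdef
    have hsum : φp + (inner ℝ v (zs - p) : ℝ) ≤ c := by
      rw [hvdef, inner_add_left, hφpdef, ← hzsval]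
      linarith
    have hvnorm : ‖v‖ ≤ (1/γ + Lf) * N := by
      have hγγ : (1/γ) * γ = 1 := by field_simp
      have hv2 : v = (1/γ) • (x - p) + (f' p - f' x) := by
        rw [hvdef, hydef]
        have h0 : x - γ • f' x - p = (x - p) - γ • f' x := by abel
        rw [h0, smul_sub, smul_smul, hγγ, one_smul]
        abel
      rw [hv2]
      have h1 : ‖(1/γ) • (x - p)‖ = (1/γ) * N := by
        rw [norm_smul, hNdef, norm_sub_rev]
        simp [abs_of_pos hγ]
      have h2 : ‖f' p - f' x‖ ≤ Lf * N := by
        calc ‖f' p - f' x‖ = dist (f' p) (f' x) := (dist_eq_norm _ _).symm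
          _ ≤ (Real.toNNReal Lf : ℝ) * dist p x := hlip.dist_le_mul _ _
          _ = Lf * N := by rw [Real.coe_toNNReal Lf hLf0, dist_eq_norm, hNdef]
      calc ‖(1/γ) • (x - p) + (f' p - f' x)‖
          ≤ ‖(1/γ) • (x - p)‖ + ‖f' p - f' x‖ := norm_add_le _ _
        _ ≤ (1/γ) * N + Lf * N := by rw [h1]; linarith
        _ = (1/γ + Lf) * N := by ring
    -- error bound chain
    have hDpzs : Dp = ‖p - zs‖ := by rw [hDp, hzs, dist_eq_norm]
    have hφpD : φp - c ≤ ‖v‖ * Dp := by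
      have h1 : (inner ℝ v (p - zs) : ℝ) ≤ ‖v‖ * ‖p - zs‖ := real_inner_le_norm _ _
      have h2 : (inner ℝ v (zs - p) : ℝ) = -(inner ℝ v (p - zs) : ℝ) := by
        rw [show zs - p = -(p - zs) by abel, inner_neg_right]
      rw [hDpzs]
      nlinarith [hsum]
    have hDpnn : 0 ≤ Dp := Metric.infDist_nonneg
    have hμD : μ * Dp ≤ 2 * ‖v‖ := by
      rcases eq_or_lt_of_le hDpnn with h | h
      · rw [← h, mul_zero]; positivity
      · have h1 : (μ/2*Dp)*Dp ≤ ‖v‖*Dp := by nlinarith [hqgp, hφpD]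
        have h2 := le_of_mul_le_mul_right h1 h
        linarith
    have hdx : Metric.infDist x Xstar ≤ N + Dp := by
      calc Metric.infDist x Xstar ≤ dist x zs := Metric.infDist_le_dist_of_mem hzsX
        _ ≤ dist x p + dist p zs := dist_triangle _ _ _
        _ = N + Dp := by
            rw [hDpzs, dist_eq_norm x p, dist_eq_norm p zs, norm_sub_rev x p, hNdef]
    -- final numeric inequality
    set dx : ℝ := Metric.infDist x Xstar with hdxdef
    have hdxnn : 0 ≤ dx := Metric.infDist_nonneg
    have hNnn : 0 ≤ N := norm_nonneg _
    set κ : ℝ := (1 + γ*Lf) * (2 + γ*μ) / (γ*μ) with hκ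
    have hdxκ : dx ≤ κ * N := by
      have hD2 : Dp ≤ 2/μ * ‖v‖ := by
        rw [div_mul_eq_mul_div, le_div_iff₀ hμ]
        nlinarith
      have h3 : Dp ≤ (2/μ * (1/γ + Lf)) * N := by
        calc Dp ≤ 2/μ * ‖v‖ := hD2
          _ ≤ 2/μ * ((1/γ + Lf) * N) := by
              apply mul_le_mul_of_nonneg_left hvnorm (by positivity)
          _ = (2/μ * (1/γ + Lf)) * N := by ring
      have h4 : 1 + 2/μ * (1/γ + Lf) ≤ κ := by
        have e1 : 1 + 2/μ * (1/γ + Lf) = (γ*μ + 2 + 2*γ*Lf)/(γ*μ) := by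
          field_simp
          ring
        rw [e1, hκ, div_le_div_iff₀ (by positivity) (by positivity)]
        have hcube : 0 ≤ γ^3*μ^2*Lf := by positivity
        nlinarith [hcube]
      have h6 : dx ≤ (1 + 2/μ * (1/γ + Lf)) * N := by
        have e2 : (1 + 2/μ * (1/γ + Lf)) * N = N + (2/μ * (1/γ + Lf)) * N := by ring
        rw [e2]
        linarith
      have h7 := mul_le_mul_of_nonneg_right h4 hNnn
      linarith
    set μ' : ℝ := (1 - γ*Lf)/(1 + γ*Lf)^2 * (μ*γ/(2 + γ*μ)^2) * μ with hμ'
    have hμ'pos : 0 < μ' := by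
      rw [hμ']
      have h1 : 0 < 1 - γ*Lf := by linarith
      positivity
    have hκδ : μ'/2 * κ^2 = δ := by
      rw [hμ', hκ, hδdef]
      field_simp
    have hfinal : μ'/2 * dx^2 ≤ δ * N^2 := by
      have h1 : dx^2 ≤ (κ * N)^2 := by
        apply pow_le_pow_left₀ hdxnn hdxκ
      calc μ'/2 * dx^2 ≤ μ'/2 * (κ * N)^2 :=
            mul_le_mul_of_nonneg_left h1 (by positivity)
        _ = (μ'/2 * κ^2) * N^2 := by ring
        _ = δ * N^2 := by rw [hκδ]
    rw [hΦ, hF, ← EReal.coe_add, EReal.coe_le_coe_iff]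
    have hstep : c + μ'/2 * dx^2 ≤ φp + δ * N^2 := add_le_add hφpc hfinal
    exact le_trans hstep hφpF
  · -- converse direction
    intro hq x hx
    have hle : fbe f f' g γ x ≤ (f x : EReal) + g x := by
      refine le_trans (iInf_le _ x) ?_
      have : (f x + (inner ℝ (f' x) (x - x) : ℝ) + 1/(2*γ) * ‖x - x‖^2 : ℝ) = f x := by
        simp
      rw [this]
    exact le_trans (hq x (le_trans hle hx)) hle
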